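/- arXiv:1404.5356 — 4 statements merged into one kernel-verified Lean document; each statement's English description precedes it below -/
import Mathlib

section
/- Let S = S(m,ℓ) be the spider with m ≥ 3 legs each having ℓ ≥ 1 vertices, let b be its body, and let 0 ≤ k ≤ ℓ. Then the expected gain of Player 1 playing the mixed strategy C_S(k) against Player 2 playing the pure strategy Z(b) is Gain(S, C_S(k), Z(b)) = m(kℓ − ⌊k²/4⌋)/(mk+1). -/
/-- The competitive-diffusion payoff of Player 1 with starting vertex `x` against
starting vertex `y`: the number of vertices strictly closer to `x` than to `y`. -/
noncomputable def gain {V : Type*} (G : SimpleGraph V) (x y : V) : ℕ :=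
  {u : V | G.dist u x < G.dist u y}.ncard

/-- The expected gain of Player 1 playing mixed strategy `X` against mixed strategy `Y`. -/
noncomputable def Gain {V : Type*} (G : SimpleGraph V) [Fintype V] (X Y : V → ℝ) : ℝ :=
  ∑ x : V, ∑ y : V, X x * Y y * (gain G x y : ℝ)

/-- The pure strategy `Z(v)` concentrated on vertex `v`. -/
def pureStrat {V : Type*} [DecidableEq V] (v : V) : V → ℝ := fun u => if u = v then 1 else 0

/-- Vertices of a spider with `m` legs each with `ℓ` vertices: `none` is the body,
`some (s, d)` is the vertex at distance `d+1` from the body on leg `s`. -/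
abbrev SpiderVert (m ℓ : ℕ) := Option (Fin m × Fin ℓ)

def spiderRel (m ℓ : ℕ) : SpiderVert m ℓ → SpiderVert m ℓ → Prop
  | none, some (_, d) => d.val = 0
  | some (s, d), some (s', d') => s = s' ∧ d.val + 1 = d'.val
  | _, _ => False

/-- The spider `S(m,ℓ)`: a body vertex to which `m` disjoint paths (legs), each with
`ℓ` vertices, are attached. -/
def Spider (m ℓ : ℕ) : SimpleGraph (SpiderVert m ℓ) := SimpleGraph.fromRel (spiderRel m ℓ)

/-- The mixed strategy `C_S(k)`: probability `1/(mk+1)` on the body and on each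
vertex at distance at most `k` from the body on each leg. -/
noncomputable def CS (m ℓ k : ℕ) : SpiderVert m ℓ → ℝ
  | none => 1 / (m * k + 1)
  | some (_, d) => if d.val + 1 ≤ k then 1 / (m * k + 1) else 0

/-!
A vertex at depth `j ≥ 1` on a leg beats the body exactly on the vertices of its own leg at
depth greater than `j / 2`, so its gain is `ℓ - ⌊j/2⌋`, while the body gains nothing against
itself. Summing over the `k` strategy vertices of each leg gives `kℓ - Σ_{j ≤ k} ⌊j/2⌋`, and
`Σ_{j ≤ k} ⌊j/2⌋ = ⌊k²/4⌋`.

Distances are pinned down by walks along a leg (upper bounds) and by the signed depth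
`legCoord s`, which changes by at most one along an edge (lower bounds).
-/

namespace SimpleGraph

variable {V : Type*} {G : SimpleGraph V}

lemma Walk.abs_sub_le_length {f : V → ℤ} (hf : ∀ a b, G.Adj a b → |f a - f b| ≤ 1)
    {u v : V} (p : G.Walk u v) : |f u - f v| ≤ p.length := by
  induction p with
  | nil => simp
  | @cons a b c hab p ih =>
    have := abs_sub_le (f a) (f b) (f c)
    have := hf a b hab
    simp only [Walk.length_cons]
    push_cast
    omega

lemma Reachable.abs_sub_le_dist {f : V → ℤ} (hf : ∀ a b, G.Adj a b → |f a - f b| ≤ 1)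
    {u v : V} (h : G.Reachable u v) : |f u - f v| ≤ G.dist u v := by
  obtain ⟨p, hp⟩ := h.exists_walk_length_eq_dist
  exact hp ▸ p.abs_sub_le_length hf

lemma exists_walk_length_of_adj_succ (f : ℕ → V) (i : ℕ) :
    ∀ d, (∀ j, i ≤ j → j < i + d → G.Adj (f (j + 1)) (f j)) →
      ∃ p : G.Walk (f (i + d)) (f i), p.length = d
  | 0, _ => ⟨.nil, rfl⟩
  | d + 1, h => by
    obtain ⟨p, hp⟩ := exists_walk_length_of_adj_succ f i d fun j hij hj => h j hij (by omega)
    exact ⟨.cons (h (i + d) (by omega) (by omega)) p, by simp [hp]⟩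

end SimpleGraph

lemma gain_self {V : Type*} (G : SimpleGraph V) (v : V) : gain G v v = 0 := by
  simp [gain]

lemma Gain_pureStrat_right {V : Type*} [Fintype V] [DecidableEq V] (G : SimpleGraph V)
    (X : V → ℝ) (v : V) : Gain G X (pureStrat v) = ∑ x, X x * gain G x v := by
  simp [Gain, pureStrat]

lemma Nat.sum_range_succ_div_two (k : ℕ) : ∑ i ∈ Finset.range k, (i + 1) / 2 = k ^ 2 / 4 := by
  induction k with
  | zero => simp
  | succ k ih =>
    rw [Finset.sum_range_succ, ih]
    obtain ⟨t, rfl | rfl⟩ := k.even_or_odd'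
    · have : (2 * t + 1) ^ 2 = 4 * (t ^ 2 + t) + 1 := by ring
      have : (2 * t) ^ 2 = 4 * t ^ 2 := by ring
      omega
    · have : (2 * t + 1 + 1) ^ 2 = 4 * (t ^ 2 + 2 * t + 1) := by ring
      have : (2 * t + 1) ^ 2 = 4 * (t ^ 2 + t) + 1 := by ring
      omega

namespace Spider

open SimpleGraph

variable {m ℓ : ℕ}

/-- The vertex at depth `j` on leg `s`; junk value `none` for `j > ℓ`. -/
def legVert (s : Fin m) : ℕ → SpiderVert m ℓ
  | 0 => none
  | j + 1 => if h : j < ℓ then some (s, ⟨j, h⟩) else none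

def legCoord (s : Fin m) : SpiderVert m ℓ → ℤ
  | none => 0
  | some (t, d) => if t = s then d.val + 1 else -(d.val + 1)

@[simp] lemma legVert_zero (s : Fin m) : legVert (ℓ := ℓ) s 0 = none := rfl

@[simp] lemma legVert_succ (s : Fin m) (d : Fin ℓ) : legVert s (d + 1) = some (s, d) := by
  simp [legVert]

lemma legCoord_legVert (s : Fin m) {j : ℕ} (hj : j ≤ ℓ) :
    legCoord s (legVert (ℓ := ℓ) s j) = j := by
  cases j with
  | zero => rfl
  | succ j => simp [legVert, legCoord, show j < ℓ by omega]

lemma adj_legVert_succ (s : Fin m) {j : ℕ} (hj : j < ℓ) :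
    (Spider m ℓ).Adj (legVert s (j + 1)) (legVert s j) := by
  cases j with
  | zero => simp [Spider, legVert, spiderRel, hj]
  | succ j =>
    simp [Spider, legVert, spiderRel, hj, show j < ℓ by omega]

lemma abs_legCoord_sub_le_one (s : Fin m) (u v : SpiderVert m ℓ) (h : (Spider m ℓ).Adj u v) :
    |legCoord s u - legCoord s v| ≤ 1 := by
  wlog huv : spiderRel m ℓ u v generalizing u v
  · rw [abs_sub_comm]
    exact this v u h.symm (((fromRel_adj _ _ _).1 h).2.resolve_left huv)
  rcases u with _ | ⟨t, d⟩ <;> rcases v with _ | ⟨t', d'⟩ <;> simp only [spiderRel] at huv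
  · simp only [legCoord]; split_ifs <;> rw [abs_le] <;> omega
  · obtain ⟨rfl, hd⟩ := huv
    simp only [legCoord]; split_ifs <;> rw [abs_le] <;> omega

lemma exists_walk_legVert (s : Fin m) {i d : ℕ} (h : i + d ≤ ℓ) :
    ∃ p : (Spider m ℓ).Walk (legVert s (i + d)) (legVert s i), p.length = d :=
  exists_walk_length_of_adj_succ _ i d fun _ _ hj => adj_legVert_succ s (by omega)

lemma reachable_body (u : SpiderVert m ℓ) : (Spider m ℓ).Reachable u none := by
  rcases u with _ | ⟨s, d⟩
  · rfl
  · obtain ⟨p, -⟩ := exists_walk_legVert (ℓ := ℓ) s (i := 0) (d := d + 1) (by omega)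
    simpa using p.reachable

lemma reachable (u v : SpiderVert m ℓ) : (Spider m ℓ).Reachable u v :=
  (reachable_body u).trans (reachable_body v).symm

lemma dist_legVert (s : Fin m) {i j : ℕ} (hi : i ≤ ℓ) (hj : j ≤ ℓ) :
    (Spider m ℓ).dist (legVert s i) (legVert s j) = ((i : ℤ) - j).natAbs := by
  wlog hji : j ≤ i generalizing i j
  · rw [dist_comm, this hj hi (by omega)]
    omega
  obtain ⟨d, rfl⟩ := Nat.exists_eq_add_of_le hji
  obtain ⟨p, hp⟩ := exists_walk_legVert s hi
  have hup := hp ▸ dist_le p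
  have hlow := (reachable (legVert (ℓ := ℓ) s (j + d)) (legVert s j)).abs_sub_le_dist
    (abs_legCoord_sub_le_one s)
  rw [legCoord_legVert s hi, legCoord_legVert s hj, abs_le] at hlow
  omega

lemma dist_some_body (s : Fin m) (d : Fin ℓ) :
    (Spider m ℓ).dist (some (s, d)) none = d + 1 := by
  rw [← legVert_succ, ← legVert_zero s, dist_legVert s d.2 (Nat.zero_le ℓ)]
  omega

lemma le_dist_some_legVert_of_ne {s t : Fin m} (hts : t ≠ s) (d : Fin ℓ) {j : ℕ} (hj : j ≤ ℓ) :
    d + 1 + j ≤ (Spider m ℓ).dist (some (t, d)) (legVert s j) := by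
  have hlow := (reachable (some (t, d)) (legVert s j)).abs_sub_le_dist
    (abs_legCoord_sub_le_one s)
  rw [legCoord_legVert s hj, abs_le] at hlow
  simp only [legCoord, hts, if_false] at hlow
  omega

lemma injOn_legVert (s : Fin m) : Set.InjOn (legVert (ℓ := ℓ) s) (Set.Iic ℓ) :=
  Set.LeftInvOn.injOn (f₁' := fun u => (legCoord s u).toNat) fun j hj => by
    simp [legCoord_legVert s hj]

lemma gain_legVert_body (s : Fin m) {j : ℕ} (hj0 : 0 < j) (hj : j ≤ ℓ) :
    gain (Spider m ℓ) (legVert s j) none = ℓ - j / 2 := by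
  have hset : {u | (Spider m ℓ).dist u (legVert s j) < (Spider m ℓ).dist u none} =
      legVert s '' Set.Ioc (j / 2) ℓ := by
    ext u
    simp only [Set.mem_ofPred_eq, Set.mem_image, Set.mem_Ioc]
    constructor
    · intro hu
      rcases u with _ | ⟨t, d⟩
      · simp at hu
      rw [dist_some_body] at hu
      by_cases hts : t = s
      · subst hts
        rw [← legVert_succ, dist_legVert t d.2 hj] at hu
        exact ⟨d + 1, ⟨by omega, d.2⟩, legVert_succ t d⟩
      · have := le_dist_some_legVert_of_ne hts d hj
        omega
    · rintro ⟨i, ⟨hji, hiℓ⟩, rfl⟩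
      rw [← legVert_zero s, dist_legVert s hiℓ hj, dist_legVert s hiℓ (Nat.zero_le ℓ)]
      omega
  rw [gain, hset, ((injOn_legVert s).mono fun i hi => hi.2).ncard_image, Set.ncard_Ioc_nat]

lemma sum_CS_mul_gain_leg (s : Fin m) {k : ℕ} (hk : k ≤ ℓ) :
    ∑ d : Fin ℓ, CS m ℓ k (some (s, d)) * (gain (Spider m ℓ) (some (s, d)) none : ℝ) =
      (((k * ℓ : ℕ) : ℝ) - ((k ^ 2 / 4 : ℕ) : ℝ)) / (m * k + 1) := by
  have hterm (d : Fin ℓ) : CS m ℓ k (some (s, d)) * (gain (Spider m ℓ) (some (s, d)) none : ℝ) =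
      if d + 1 ≤ k then ((ℓ - (d + 1) / 2 : ℕ) : ℝ) / (m * k + 1) else 0 := by
    rw [← legVert_succ, gain_legVert_body s (by omega) d.2, legVert_succ]
    simp only [CS]
    split_ifs <;> ring
  rw [Fintype.sum_congr _ _ hterm, Fin.sum_univ_eq_sum_range
      (fun i => if i + 1 ≤ k then ((ℓ - (i + 1) / 2 : ℕ) : ℝ) / (m * k + 1) else 0),
    ← Finset.sum_range_add_sum_Ico _ hk,
    Finset.sum_congr rfl fun i hi => if_pos (Nat.succ_le_of_lt (Finset.mem_range.1 hi)),
    Finset.sum_eq_zero fun i hi => if_neg (by simp at hi; omega), add_zero, ← Finset.sum_div]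
  have hsum : ∑ i ∈ Finset.range k, (ℓ - (i + 1) / 2) + k ^ 2 / 4 = k * ℓ := by
    rw [← Nat.sum_range_succ_div_two, ← Finset.sum_add_distrib,
      Finset.sum_congr rfl fun i hi => Nat.sub_add_cancel (by simp at hi; omega)]
    simp [mul_comm]
  rw [← hsum]
  push_cast
  ring

end Spider

theorem stmt_5_general (m ℓ k : ℕ) (hk : k ≤ ℓ) :
    Gain (Spider m ℓ) (CS m ℓ k) (pureStrat (none : SpiderVert m ℓ)) =
      (m : ℝ) * (((k * ℓ : ℕ) : ℝ) - ((k ^ 2 / 4 : ℕ) : ℝ)) / (m * k + 1) := by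
  rw [Gain_pureStrat_right, Fintype.sum_option, gain_self, Fintype.sum_prod_type,
    Fintype.sum_congr _ _ fun s => Spider.sum_CS_mul_gain_leg s hk, Finset.sum_const,
    Finset.card_univ, Fintype.card_fin, nsmul_eq_mul, Nat.cast_zero, mul_zero, zero_add]
  ring

/-- On the spider `S(m,ℓ)` with body `b`, for `0 ≤ k ≤ ℓ`,
`Gain(S, C_S(k), Z(b)) = m (kℓ - ⌊k²/4⌋) / (mk + 1)`. -/
theorem stmt_5 (m ℓ k : ℕ) (hm : 3 ≤ m) (hℓ : 1 ≤ ℓ) (hk : k ≤ ℓ) :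
    Gain (Spider m ℓ) (CS m ℓ k) (pureStrat (none : SpiderVert m ℓ)) =
      (m : ℝ) * (((k * ℓ : ℕ) : ℝ) - ((k ^ 2 / 4 : ℕ) : ℝ)) / (m * k + 1) :=
  stmt_5_general m ℓ k hk
end

section
/- Let S = S(m,ℓ) be the spider with m ≥ 3 legs each having ℓ ≥ 1 vertices and let 0 ≤ k < ℓ. For k < d < ℓ, let v_d and v_{d+1} denote the vertices at distances d and d+1 from the body on one fixed leg. Then Gain(S, C_S(k), Z(v_d)) ≤ Gain(S, C_S(k), Z(v_{d+1})); that is, the expected gain of Player 1 with strategy C_S(k) against a pure strategy at distance d > k from the body on a leg is nondecreasing in d. -/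
namespace SimpleGraph

variable {V : Type*} {G : SimpleGraph V}

theorem le_add_length_of_adj_le {f : V → ℕ} (hf : ∀ u w, G.Adj u w → f u ≤ f w + 1)
    {u v : V} (p : G.Walk u v) : f u ≤ f v + p.length := by
  induction p with
  | nil => simp
  | cons h _ ih => grind [hf _ _ h, Walk.length_cons]

theorem dist_eq_of_adj_le_of_exists_adj {v : V} {f : V → ℕ} (hv : f v = 0)
    (hf : ∀ u w, G.Adj u w → f u ≤ f w + 1)
    (hdesc : ∀ u, u ≠ v → ∃ w, G.Adj u w ∧ f w + 1 = f u) (u : V) :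
    G.dist u v = f u := by
  have hwalk : ∀ n u, f u = n → ∃ p : G.Walk u v, p.length = n := by
    intro n
    induction n with
    | zero =>
      intro u hu
      by_cases huv : u = v
      · exact huv ▸ ⟨Walk.nil, rfl⟩
      · obtain ⟨w, -, hw⟩ := hdesc u huv
        omega
    | succ n ih =>
      intro u hu
      obtain ⟨w, hadj, hw⟩ := hdesc u (by rintro rfl; omega)
      obtain ⟨p, hp⟩ := ih w (by omega)
      exact ⟨Walk.cons hadj p, by simp [hp]⟩
  obtain ⟨p, hp⟩ := hwalk _ u rfl
  obtain ⟨q, hq⟩ := Reachable.exists_walk_length_eq_dist ⟨p⟩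
  have := le_add_length_of_adj_le hf q
  have := hp ▸ dist_le p
  omega

end SimpleGraph

section Gain

variable {V : Type*} (G : SimpleGraph V)

theorem gain_le_gain [Finite V] {x w w' : V}
    (h : ∀ u, G.dist u x < G.dist u w → G.dist u x < G.dist u w') :
    gain G x w ≤ gain G x w' :=
  Set.ncard_le_ncard h (Set.toFinite _)

variable [Fintype V] [DecidableEq V]

theorem Gain_pureStrat (X : V → ℝ) (v : V) :
    Gain G X (pureStrat v) = ∑ x, X x * gain G x v := by
  refine Finset.sum_congr rfl fun x _ => ?_
  rw [Finset.sum_eq_single v (fun y _ hy => by simp [pureStrat, hy]) (by simp)]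
  simp [pureStrat]

theorem Gain_pureStrat_le_Gain_pureStrat {X : V → ℝ} (hX : 0 ≤ X) {w w' : V}
    (h : ∀ x, X x ≠ 0 → gain G x w ≤ gain G x w') :
    Gain G X (pureStrat w) ≤ Gain G X (pureStrat w') := by
  rw [Gain_pureStrat, Gain_pureStrat]
  refine Finset.sum_le_sum fun x _ => ?_
  by_cases hx : X x = 0
  · simp [hx]
  · exact mul_le_mul_of_nonneg_left (by exact_mod_cast h x hx) (hX x)

end Gain

namespace Spider

variable {m ℓ : ℕ}

def depth : SpiderVert m ℓ → ℕ
  | none => 0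
  | some (_, i) => i.val + 1

def spiderDist : SpiderVert m ℓ → SpiderVert m ℓ → ℕ
  | none, v => depth v
  | some (_, i), none => i.val + 1
  | some (t, i), some (t', j) =>
    if t = t' then max i.val j.val - min i.val j.val else i.val + j.val + 2

theorem adj_none_some (t : Fin m) (j : Fin ℓ) (hj : j.val = 0) :
    (Spider m ℓ).Adj none (some (t, j)) :=
  (SimpleGraph.fromRel_adj _ _ _).2 ⟨by simp, Or.inl hj⟩

theorem adj_some_some (t : Fin m) (i j : Fin ℓ) (hij : i.val + 1 = j.val) :
    (Spider m ℓ).Adj (some (t, i)) (some (t, j)) :=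
  (SimpleGraph.fromRel_adj _ _ _).2 ⟨fun h => by cases h; omega, Or.inl ⟨rfl, hij⟩⟩

theorem spiderDist_le_of_spiderRel {u w : SpiderVert m ℓ} (h : spiderRel m ℓ u w)
    (v : SpiderVert m ℓ) :
    spiderDist u v ≤ spiderDist w v + 1 ∧ spiderDist w v ≤ spiderDist u v + 1 := by
  rcases u with _ | ⟨t, i⟩ <;> rcases w with _ | ⟨t', j⟩ <;> simp only [spiderRel] at h
  all_goals
    (try obtain ⟨rfl, h⟩ := h)
    rcases v with _ | ⟨s, k⟩ <;> simp only [spiderDist, depth] <;> (try split_ifs) <;> omega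

theorem spiderDist_le_of_adj {u w : SpiderVert m ℓ} (h : (Spider m ℓ).Adj u w)
    (v : SpiderVert m ℓ) : spiderDist u v ≤ spiderDist w v + 1 := by
  obtain ⟨-, h | h⟩ := (SimpleGraph.fromRel_adj _ _ _).1 h
  · exact (spiderDist_le_of_spiderRel h v).1
  · exact (spiderDist_le_of_spiderRel h v).2

theorem spiderDist_self (v : SpiderVert m ℓ) : spiderDist v v = 0 := by
  rcases v with _ | ⟨t, i⟩ <;> simp [spiderDist, depth]

theorem exists_adj_spiderDist_succ {u v : SpiderVert m ℓ} (huv : u ≠ v) :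
    ∃ w, (Spider m ℓ).Adj u w ∧ spiderDist w v + 1 = spiderDist u v := by
  rcases u with _ | ⟨t, i⟩
  · rcases v with _ | ⟨t, j⟩
    · exact absurd rfl huv
    exact ⟨some (t, ⟨0, j.pos⟩), adj_none_some t _ rfl, by simp [spiderDist, depth]⟩
  by_cases hbeyond : ∃ j : Fin ℓ, v = some (t, j) ∧ i < j
  · obtain ⟨j, rfl, hij⟩ := hbeyond
    refine ⟨some (t, ⟨i + 1, by omega⟩), adj_some_some t i _ rfl, ?_⟩
    simp only [spiderDist, if_pos]
    omega
  simp only [not_exists, not_and, not_lt] at hbeyond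
  have hsame : ∀ j : Fin ℓ, v = some (t, j) → j.val < i.val := fun j hj =>
    lt_of_le_of_ne (hbeyond j hj) (fun h => huv (by rw [hj, Fin.ext h]))
  rcases Nat.eq_zero_or_pos i.val with hi | hi
  · refine ⟨none, (adj_none_some t i hi).symm, ?_⟩
    rcases v with _ | ⟨t', j⟩
    · simp [spiderDist, depth, hi]
    · have := hsame j
      simp only [spiderDist, depth]
      split_ifs <;> simp_all
  · refine ⟨some (t, ⟨i - 1, by omega⟩), (adj_some_some t _ i (by simp only; omega)).symm, ?_⟩
    rcases v with _ | ⟨t', j⟩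
    · simp only [spiderDist]
      omega
    · have := hsame j
      simp only [spiderDist]
      split_ifs <;> simp_all <;> omega

theorem dist_eq_spiderDist (u v : SpiderVert m ℓ) : (Spider m ℓ).dist u v = spiderDist u v :=
  SimpleGraph.dist_eq_of_adj_le_of_exists_adj (f := (spiderDist · v)) (spiderDist_self v)
    (fun _ _ h => spiderDist_le_of_adj h v) (fun _ h => exists_adj_spiderDist_succ h) u

theorem CS_nonneg (k : ℕ) : 0 ≤ CS m ℓ k := by
  rintro (_ | ⟨t, i⟩) <;> simp only [CS, Pi.zero_apply] <;> (try split_ifs) <;> positivity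

theorem depth_le_of_CS_ne_zero {k : ℕ} {x : SpiderVert m ℓ} (hx : CS m ℓ k x ≠ 0) :
    depth x ≤ k := by
  rcases x with _ | ⟨t, i⟩
  · exact Nat.zero_le k
  · by_contra h
    exact hx (if_neg (by simpa [depth] using h))

theorem spiderDist_lt_of_lt_of_depth_le {s : Fin m} {i j : Fin ℓ} (hij : i.val + 1 = j.val)
    {x u : SpiderVert m ℓ} (hx : depth x ≤ j.val)
    (h : spiderDist u x < spiderDist u (some (s, i))) :
    spiderDist u x < spiderDist u (some (s, j)) := by
  rcases x with _ | ⟨t, a⟩ <;> rcases u with _ | ⟨t', b⟩ <;>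
    simp only [spiderDist, depth] at * <;> (try split_ifs at *) <;> omega

end Spider

/-- On the spider `S(m,ℓ)`, for `0 ≤ k < ℓ` and `k < d < ℓ`, the gain of `C_S(k)`
against the pure strategy at the vertex at distance `d` from the body on a leg is at
most that against the vertex at distance `d+1` on the same leg (nondecreasing in `d`). -/
theorem stmt_7 (m ℓ k : ℕ) (s : Fin m) (d : ℕ) (hd1 : k < d) (hd2 : d < ℓ) :
    Gain (Spider m ℓ) (CS m ℓ k) (pureStrat (some (s, ⟨d - 1, by omega⟩) : SpiderVert m ℓ)) ≤
      Gain (Spider m ℓ) (CS m ℓ k) (pureStrat (some (s, ⟨d, hd2⟩) : SpiderVert m ℓ)) := by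
  refine Gain_pureStrat_le_Gain_pureStrat _ (Spider.CS_nonneg k) fun x hx =>
    gain_le_gain _ fun u hu => ?_
  simp only [Spider.dist_eq_spiderDist] at hu ⊢
  have hx := Spider.depth_le_of_CS_ne_zero hx
  exact Spider.spiderDist_lt_of_lt_of_depth_le (s := s) (i := ⟨d - 1, by omega⟩)
    (j := ⟨d, hd2⟩) (x := x) (by simp only; omega) (by simp only; omega) hu
end

section
/- Let T be a centroidal tree (a tree whose centroid consists of a single vertex c) and let B be a branch at c. Then every vertex of B other than c that has minimal weight among the vertices of B ∖ {c} is adjacent to c; moreover, if u is this neighbor of c in B and B has at least two vertices other than c, then every vertex of minimal weight among the vertices of B ∖ {c, u} is adjacent to u. -/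
/-- The number of edges of the branch of the tree `G` at vertex `v` containing the
neighbour `u` of `v`: this equals the number of vertices strictly closer to `u`
than to `v`. -/
noncomputable def branchWeight {V : Type*} (G : SimpleGraph V) (v u : V) : ℕ :=
  {x : V | G.dist x u < G.dist x v}.ncard

open Classical in
/-- The weight of a vertex `v`: the maximum number of edges in a branch at `v`. -/
noncomputable def weight {V : Type*} (G : SimpleGraph V) [Fintype V] (v : V) : ℕ :=
  (G.neighborFinset v).sup (branchWeight G v)

/-- The centroid: the set of vertices of minimal weight. -/
noncomputable def centroid {V : Type*} (G : SimpleGraph V) [Fintype V] : Set V :=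
  {v | ∀ u, weight G v ≤ weight G u}

namespace Stmt18Aux

open SimpleGraph Walk

variable {V : Type*} {G : SimpleGraph V}

/-- In a tree, every path realizes the distance. -/
lemma path_length_eq_dist (hG : G.IsTree) {x y : V} {p : G.Walk x y} (hp : p.IsPath) :
    p.length = G.dist x y := by
  classical
  obtain ⟨w, hw⟩ := (hG.isConnected.preconnected x y).exists_walk_length_eq_dist
  have hpq : (⟨p, hp⟩ : G.Path x y) = ⟨w.bypass, w.bypass_isPath⟩ :=
    hG.IsAcyclic.path_unique _ _
  have h1 : p.length = w.bypass.length := congrArg Walk.length (congrArg Subtype.val hpq)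
  have h2 : w.bypass.length ≤ w.length := w.length_bypass_le
  have h3 : G.dist x y ≤ p.length := SimpleGraph.dist_le p
  omega

lemma split_dist (hG : G.IsTree) {x z b : V} {p : G.Walk x z} (hp : p.IsPath)
    (hb : b ∈ p.support) : G.dist x b + G.dist b z = p.length := by
  classical
  have h1 : (p.takeUntil b hb).length = G.dist x b :=
    path_length_eq_dist hG (hp.takeUntil hb)
  have h2 : (p.dropUntil b hb).length = G.dist b z :=
    path_length_eq_dist hG (hp.dropUntil hb)
  have h3 := congrArg Walk.length (p.take_spec hb)
  rw [Walk.length_append] at h3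
  omega

lemma dist_eq_zero (hG : G.IsTree) {x y : V} (h : G.dist x y = 0) : x = y := by
  by_contra hne
  have := hG.isConnected.pos_dist_of_ne hne
  omega

/-- On a path in a tree, a support vertex is determined by its distance to the start. -/
lemma support_eq_of_dist_eq (hG : G.IsTree) {x z b b' : V} {p : G.Walk x z} (hp : p.IsPath)
    (hb : b ∈ p.support) (hb' : b' ∈ p.support) (h : G.dist x b = G.dist x b') : b = b' := by
  classical
  have hspec := p.take_spec hb
  have hmem : b' ∈ (p.takeUntil b hb).support ∨ b' ∈ (p.dropUntil b hb).support := by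
    rw [← Walk.mem_support_append_iff, hspec]; exact hb'
  rcases hmem with hmem | hmem
  · have h1 := split_dist hG (hp.takeUntil hb) hmem
    have h2 : (p.takeUntil b hb).length = G.dist x b :=
      path_length_eq_dist hG (hp.takeUntil hb)
    exact (dist_eq_zero hG (by omega : G.dist b' b = 0)).symm
  · have h1 := split_dist hG (hp.dropUntil hb) hmem
    have h2 : (p.dropUntil b hb).length = G.dist b z :=
      path_length_eq_dist hG (hp.dropUntil hb)
    have h3 := split_dist hG hp hb
    have h4 := split_dist hG hp hb'
    exact dist_eq_zero hG (by omega : G.dist b b' = 0)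

/-- Dichotomy: for an edge `a-b` of a tree, every vertex is strictly closer to exactly one end. -/
lemma dist_dichotomy (hG : G.IsTree) {a b : V} (hab : G.Adj a b) (x : V) :
    G.dist x b = G.dist x a + 1 ∨ G.dist x a = G.dist x b + 1 := by
  classical
  obtain ⟨p, hplen⟩ := (hG.isConnected.preconnected x a).exists_walk_length_eq_dist
  have hp : p.IsPath := p.isPath_of_length_eq_dist hplen
  by_cases hb : b ∈ p.support
  · right
    have h1 := split_dist hG hp hb
    have h2 : G.dist b a = 1 := SimpleGraph.dist_eq_one_iff_adj.mpr hab.symm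
    omega
  · left
    have hq : (Walk.cons hab.symm p.reverse).IsPath := by
      rw [Walk.cons_isPath_iff]
      exact ⟨hp.reverse, by simpa using hb⟩
    have := path_length_eq_dist hG hq.reverse
    simp only [Walk.length_reverse, Walk.length_cons] at this
    omega

/-- Existence of a neighbour strictly closer to `x`. -/
lemma exists_adj_dist (hG : G.IsTree) {a x : V} (h : x ≠ a) :
    ∃ b, G.Adj a b ∧ G.dist x b + 1 = G.dist x a := by
  obtain ⟨p, hplen⟩ := (hG.isConnected.preconnected a x).exists_walk_length_eq_dist
  cases p with
  | nil => exact absurd rfl h.symm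
  | cons hadj q =>
    rename_i b
    refine ⟨b, hadj, ?_⟩
    have h1 : G.dist b x ≤ q.length := SimpleGraph.dist_le q
    have h2 : G.dist x a ≤ G.dist x b + G.dist b a :=
      hG.isConnected.dist_triangle
    have h3 : G.dist b a ≤ 1 := by
      have : G.dist b a = 1 := SimpleGraph.dist_eq_one_iff_adj.mpr hadj.symm
      omega
    have h4 : G.dist x b = G.dist b x := SimpleGraph.dist_comm
    have h5 : G.dist x a = G.dist a x := SimpleGraph.dist_comm
    have h6 : 0 < G.dist x a := by
      rw [h5]; exact hG.isConnected.pos_dist_of_ne (fun he => h he.symm)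
    simp only [Walk.length_cons] at hplen
    omega

/-- Uniqueness of the closer neighbour. -/
lemma adj_dist_unique (hG : G.IsTree) {a b b' x : V} (hb : G.Adj a b) (hb' : G.Adj a b')
    (h1 : G.dist x b + 1 = G.dist x a) (h2 : G.dist x b' + 1 = G.dist x a) : b = b' := by
  classical
  have key : ∀ {y : V} (hy : G.Adj a y), G.dist x y + 1 = G.dist x a →
      ∃ (q : G.Walk x a), q.IsPath ∧ y ∈ q.support := by
    intro y hy hdy
    obtain ⟨p, hplen⟩ := (hG.isConnected.preconnected x y).exists_walk_length_eq_dist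
    have hp : p.IsPath := p.isPath_of_length_eq_dist hplen
    have ha : a ∉ p.support := by
      intro hmem
      have := split_dist hG hp hmem
      omega
    have hq : (Walk.cons hy p.reverse).IsPath := by
      rw [Walk.cons_isPath_iff]
      exact ⟨hp.reverse, by simpa using ha⟩
    refine ⟨(Walk.cons hy p.reverse).reverse, hq.reverse, ?_⟩
    simp
  obtain ⟨q, hq, hbq⟩ := key hb h1
  obtain ⟨q', hq', hbq'⟩ := key hb' h2
  have : (⟨q, hq⟩ : G.Path x a) = ⟨q', hq'⟩ := hG.IsAcyclic.path_unique _ _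
  have hqq : q = q' := congrArg Subtype.val this
  subst hqq
  exact support_eq_of_dist_eq hG hq hbq hbq' (by omega)


section Weight

variable [Fintype V]

lemma branch_le_weight {v u : V} (h : G.Adj v u) : branchWeight G v u ≤ weight G v := by
  classical
  exact Finset.le_sup ((G.mem_neighborFinset v u).mpr h)

lemma weight_le {v : V} {m : ℕ} (h : ∀ u, G.Adj v u → branchWeight G v u ≤ m) :
    weight G v ≤ m := by
  classical
  exact Finset.sup_le fun u hu => h u ((G.mem_neighborFinset v u).mp hu)

lemma exists_eq_weight {v u₁ : V} (h : G.Adj v u₁) :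
    ∃ u, G.Adj v u ∧ weight G v = branchWeight G v u := by
  classical
  obtain ⟨u, hu, he⟩ := Finset.exists_mem_eq_sup (G.neighborFinset v)
    ⟨u₁, (G.mem_neighborFinset v u₁).mpr h⟩ (branchWeight G v)
  exact ⟨u, (G.mem_neighborFinset v u).mp hu, he⟩

lemma branch_add_branch (hG : G.IsTree) {a b : V} (hab : G.Adj a b) :
    branchWeight G a b + branchWeight G b a = Fintype.card V := by
  have hcompl : {x : V | G.dist x a < G.dist x b} = {x : V | G.dist x b < G.dist x a}ᶜ := by
    ext x
    simp only [Set.mem_setOf_eq, Set.mem_compl_iff, not_lt]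
    rcases dist_dichotomy hG hab x with h | h <;> omega
  rw [branchWeight, branchWeight, hcompl,
    Set.ncard_add_ncard_compl _ (Set.toFinite _), Nat.card_eq_fintype_card]

end Weight

lemma branch_nested (hG : G.IsTree) {a b b' : V} (hab : G.Adj a b) (hbb' : G.Adj b b')
    (hne : b' ≠ a) :
    {x : V | G.dist x b' < G.dist x b} ⊆ {x : V | G.dist x b < G.dist x a} \ {b} := by
  intro x hx
  simp only [Set.mem_setOf_eq] at hx
  have hd1 : G.dist x b = G.dist x b' + 1 := by
    rcases dist_dichotomy hG hbb' x with h | h <;> omega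
  constructor
  · simp only [Set.mem_setOf_eq]
    rcases dist_dichotomy hG hab x with h | h
    · -- d x b = d x a + 1 : both a and b' closer neighbours of b, contradiction
      exact absurd (adj_dist_unique hG (x := x) hbb' hab.symm (by omega) (by omega)) hne
    · omega
  · simp only [Set.mem_singleton_iff]
    intro hxb
    subst hxb
    have h0 : G.dist x x = 0 := by simp
    omega

variable [Fintype V]

lemma branch_le_weight_of_toward (hG : G.IsTree) (a : V) :
    ∀ n (y z : V), G.Adj z y → G.dist a y = n → G.dist a z = n + 1 →
      branchWeight G y z ≤ weight G a := by
  intro n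
  induction n with
  | zero =>
    intro y z hzy hy hz
    have : a = y := dist_eq_zero hG hy
    subst this
    exact branch_le_weight hzy.symm
  | succ n ih =>
    intro y z hzy hy hz
    have hya : a ≠ y := by
      intro h
      subst h
      rw [SimpleGraph.dist_self] at hy
      omega
    obtain ⟨y₂, hyy₂, hd⟩ := exists_adj_dist hG hya
    have hzy₂ : z ≠ y₂ := by
      intro h; rw [h] at hz; omega
    have hsub := branch_nested hG hyy₂.symm hzy.symm hzy₂
    calc branchWeight G y z
        ≤ ({x : V | G.dist x y < G.dist x y₂} \ {y}).ncard :=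
          Set.ncard_le_ncard hsub (Set.toFinite _)
      _ ≤ branchWeight G y₂ y :=
          Set.ncard_le_ncard Set.diff_subset (Set.toFinite _)
      _ ≤ weight G a := ih y₂ y hyy₂ (by omega) hy

lemma card_le_weight_add_weight (hG : G.IsTree) {a z : V} (h : z ≠ a) :
    Fintype.card V ≤ weight G a + weight G z := by
  obtain ⟨y, hzy, hd⟩ := exists_adj_dist hG (fun he => h he.symm)
  have h1 : branchWeight G z y ≤ weight G z := branch_le_weight hzy
  have h2 : branchWeight G y z ≤ weight G a :=
    branch_le_weight_of_toward hG a (G.dist a y) y z hzy rfl (by omega)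
  have h3 := branch_add_branch hG hzy
  omega

lemma exists_adj_weight_lt (hG : G.IsTree) {c v : V} (hc : centroid G = {c}) (hv : v ≠ c) :
    ∃ b, G.Adj v b ∧ weight G b < weight G v := by
  have hcmem : c ∈ centroid G := by rw [hc]; rfl
  have hvnot : v ∉ centroid G := by rw [hc]; simpa using hv
  have hlt : weight G c < weight G v := by
    simp only [centroid, Set.mem_setOf_eq, not_forall, not_le] at hvnot
    obtain ⟨u, hu⟩ := hvnot
    exact lt_of_le_of_lt (hcmem u) hu
  have hcard : Fintype.card V ≤ weight G v + weight G c :=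
    card_le_weight_add_weight hG (fun he => hv he.symm)
  have hn1 : 1 ≤ Fintype.card V := Fintype.card_pos_iff.mpr ⟨c⟩
  obtain ⟨b₀, hb₀, _⟩ := exists_adj_dist hG (a := v) (x := c) hv.symm
  obtain ⟨b, hvb, hwb⟩ := exists_eq_weight hb₀
  set W := weight G v with hW
  have hSvb : branchWeight G v b = W := hwb.symm
  have hsum := branch_add_branch hG hvb
  have hbmem : b ∈ {x : V | G.dist x b < G.dist x v} := by
    simp only [Set.mem_setOf_eq]
    have : G.dist b v = 1 := SimpleGraph.dist_eq_one_iff_adj.mpr hvb.symm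
    simp [this]
  refine ⟨b, hvb, ?_⟩
  have hble : weight G b ≤ W - 1 := by
    apply weight_le
    intro b' hbb'
    by_cases hb'v : b' = v
    · subst hb'v
      omega
    · have hsub := branch_nested hG hvb hbb' hb'v
      calc branchWeight G b b'
          ≤ ({x : V | G.dist x b < G.dist x v} \ {b}).ncard :=
            Set.ncard_le_ncard hsub (Set.toFinite _)
        _ = branchWeight G v b - 1 := by
            rw [branchWeight, ← Set.ncard_diff_singleton_add_one hbmem (Set.toFinite _)]
            omega
        _ = W - 1 := by rw [hSvb]
  omega


omit [Fintype V] in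
lemma all_adj_mem (hG : G.IsTree) {c u₀ v x : V} (hu₀ : G.Adj c u₀)
    (hv : G.dist v u₀ < G.dist v c) (hvc : ¬ G.Adj c v) (hx : G.Adj v x) :
    G.dist x u₀ < G.dist x c := by
  have ecx : G.dist c x = G.dist x c := SimpleGraph.dist_comm
  have ecv : G.dist c v = G.dist v c := SimpleGraph.dist_comm
  have eux : G.dist u₀ x = G.dist x u₀ := SimpleGraph.dist_comm
  have euv : G.dist u₀ v = G.dist v u₀ := SimpleGraph.dist_comm
  have h1 : G.dist v c = G.dist v u₀ + 1 := by
    rcases dist_dichotomy hG hu₀ v with h | h <;> omega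
  have hcv1 : G.dist v c ≠ 1 := fun h =>
    hvc ((SimpleGraph.dist_eq_one_iff_adj.mp h).symm)
  have hvu₀pos : 1 ≤ G.dist v u₀ := by omega
  have dX := dist_dichotomy hG hu₀ x
  rcases dist_dichotomy hG hx c with hC | hC <;> rcases dist_dichotomy hG hx u₀ with hU | hU
  · omega
  · omega
  · -- hard case: x is the parent of v toward c but farther from u₀ : impossible
    exfalso
    have hvu₀ : u₀ ≠ v := by
      intro h; subst h; rw [SimpleGraph.dist_self] at hvu₀pos; omega
    obtain ⟨p, hvp, hdp⟩ := exists_adj_dist hG (a := v) (x := u₀) hvu₀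
    have htri : G.dist c p ≤ G.dist c u₀ + G.dist u₀ p :=
      hG.isConnected.dist_triangle
    have hcu : G.dist c u₀ = 1 := SimpleGraph.dist_eq_one_iff_adj.mpr hu₀
    have hcp : G.dist c v = G.dist c p + 1 := by
      rcases dist_dichotomy hG hvp c with h | h <;> omega
    have hxp : x = p := adj_dist_unique hG (x := c) hx hvp (by omega) (by omega)
    subst hxp
    omega
  · omega

end Stmt18Aux

open Stmt18Aux

/-- In a centroidal tree with centroid vertex `c`, in any branch `B` at `c`
(determined by the neighbour `u₀` of `c` it contains; `B` denotes its vertex set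
without `c`), every vertex of minimal weight in `B` is adjacent to `c`; moreover if
`u` is this neighbour of `c` and `B` has at least two vertices, then every vertex of
minimal weight in `B \ {u}` is adjacent to `u`. -/
theorem stmt_18 {V : Type*} [Fintype V] (G : SimpleGraph V) (hG : G.IsTree)
    (c : V) (hc : centroid G = {c}) (u₀ : V) (hu₀ : G.Adj c u₀)
    (B : Set V) (hB : B = {x | G.dist x u₀ < G.dist x c}) :
    (∀ v ∈ B, (∀ x ∈ B, weight G v ≤ weight G x) → G.Adj c v) ∧
    (∀ u ∈ B, G.Adj c u → (∀ x ∈ B, weight G u ≤ weight G x) → 2 ≤ B.ncard →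
      ∀ t ∈ B \ {u}, (∀ x ∈ B \ {u}, weight G t ≤ weight G x) → G.Adj u t) := by
  have hmemB : ∀ x, x ∈ B ↔ G.dist x u₀ < G.dist x c := by
    intro x; rw [hB]; rfl
  have hS2 : ∀ v, v ∈ B → G.Adj c v → v = u₀ := by
    intro v hv hadj
    rw [hmemB] at hv
    have h1 : G.dist v c = 1 := SimpleGraph.dist_eq_one_iff_adj.mpr hadj.symm
    exact dist_eq_zero hG (by omega : G.dist v u₀ = 0)
  have hne_c : ∀ v, v ∈ B → v ≠ c := by
    intro v hv h
    rw [hmemB] at hv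
    subst h
    rw [SimpleGraph.dist_self] at hv
    omega
  constructor
  · intro v hvB hmin
    by_contra hadj
    obtain ⟨b, hvb, hwlt⟩ := exists_adj_weight_lt hG hc (hne_c v hvB)
    have hbB : b ∈ B := by
      rw [hmemB]
      exact all_adj_mem hG hu₀ ((hmemB v).mp hvB) hadj hvb
    have := hmin b hbB
    omega
  · intro u huB hadjcu hminu hcard t htB hmin
    by_contra hadj
    obtain ⟨htB', htu⟩ := htB
    have hu : u = u₀ := hS2 u huB hadjcu
    have hct : ¬ G.Adj c t := by
      intro h
      exact htu (by rw [Set.mem_singleton_iff, hS2 t htB' h, hu])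
    obtain ⟨b, htb, hwlt⟩ := exists_adj_weight_lt hG hc (hne_c t htB')
    have hbB : b ∈ B := by
      rw [hmemB]
      exact all_adj_mem hG hu₀ ((hmemB t).mp htB') hct htb
    have hbu : b ≠ u := fun h => hadj (h ▸ htb.symm)
    have := hmin b ⟨hbB, by simpa using hbu⟩
    omega
end

section
/- Let T be a centroidal tree with n vertices and centroid vertex c, and let u and u' be (not necessarily distinct) neighbors of c. Then w(u) > n − w(u'). -/
namespace SimpleGraph

variable {V : Type*} {G : SimpleGraph V}

lemma IsTree.branchWeight_add_branchWeight [Finite V] (hG : G.IsTree) {a b : V}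
    (hab : G.Adj a b) : branchWeight G a b + branchWeight G b a = Nat.card V := by
  have hcompl : {x | G.dist x a < G.dist x b} = {x | G.dist x b < G.dist x a}ᶜ := by
    ext x
    simpa only [Set.mem_ofPred_eq, Set.mem_compl_iff, not_lt]
      using (hG.dist_ne_of_adj x hab).le_iff_lt.symm
  rw [branchWeight, branchWeight, hcompl, Set.ncard_add_ncard_compl]

lemma branchWeight_le_weight [Fintype V] {v u : V} (h : G.Adj v u) :
    branchWeight G v u ≤ weight G v := by
  classical
  exact Finset.le_sup (by rwa [mem_neighborFinset])

lemma weight_lt_of_centroid_eq_singleton [Fintype V] {c v : V} (hc : centroid G = {c})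
    (hv : v ≠ c) : weight G c < weight G v := by
  have hc_min : ∀ w, weight G c ≤ weight G w := by
    change c ∈ centroid G
    rw [hc]
    rfl
  refine (hc_min v).lt_of_ne fun heq ↦ hv ?_
  have hv_min : v ∈ centroid G := fun w ↦ heq ▸ hc_min w
  rwa [hc] at hv_min

end SimpleGraph

/-- In a centroidal tree with `n` vertices and centroid vertex `c`, for any
(not necessarily distinct) neighbours `u`, `u'` of `c` we have `w(u) > n - w(u')`. -/
theorem stmt_19 {V : Type*} [Fintype V] (G : SimpleGraph V) (hG : G.IsTree)
    (c : V) (hc : centroid G = {c}) (u u' : V) (hu : G.Adj c u) (hu' : G.Adj c u') :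
    (Fintype.card V : ℤ) - weight G u' < weight G u := by
  have hsplit := hG.branchWeight_add_branchWeight hu
  have hcu := SimpleGraph.branchWeight_le_weight hu
  have huc := SimpleGraph.branchWeight_le_weight hu.symm
  have hc_lt := SimpleGraph.weight_lt_of_centroid_eq_singleton hc hu'.ne'
  rw [Nat.card_eq_fintype_card] at hsplit
  omega
end
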